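/- arXiv:2109.11791 — 3 statements merged into one kernel-verified Lean document; each statement's English description precedes it below -/
import Mathlib

section
/- Let H be an m×m real symmetric matrix whose diagonal entries are all strictly positive (H j j > 0 for every j). If y ∈ [0,1]^m is a maximizer of the quadratic form x ↦ xᵀHx over the cube [0,1]^m (i.e., yᵀHy ≥ xᵀHx for all x with 0 ≤ x_j ≤ 1 for all j), then every coordinate of y equals 0 or 1. -/
open Matrix

lemma quad_expand {m : ℕ} (H : Matrix (Fin m) (Fin m) ℝ) (y : Fin m → ℝ)
    (j : Fin m) (t : ℝ) :
    (y + t • (Pi.single j 1 : Fin m → ℝ)) ⬝ᵥ (H *ᵥ (y + t • (Pi.single j 1 : Fin m → ℝ))) =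
      y ⬝ᵥ (H *ᵥ y) + t * ((H *ᵥ y) j + (y ᵥ* H) j) + t^2 * H j j := by
  have hmv : H *ᵥ (t • (Pi.single j 1 : Fin m → ℝ)) = t • fun i => H i j := by
    ext i
    simp [mulVec, dotProduct, Pi.single_apply, mul_ite, Finset.sum_ite_eq, mul_comm]
  rw [mulVec_add, hmv, dotProduct_add, add_dotProduct, add_dotProduct,
    smul_dotProduct, smul_dotProduct, dotProduct_smul, dotProduct_smul]
  have h1 : (Pi.single j 1 : Fin m → ℝ) ⬝ᵥ (H *ᵥ y) = (H *ᵥ y) j := by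
    simp [dotProduct, Pi.single_apply, ite_mul, Finset.sum_ite_eq, mul_comm]
  have h2 : y ⬝ᵥ (fun i => H i j) = (y ᵥ* H) j := by
    simp [dotProduct, vecMul, mul_comm]
  have h3 : (Pi.single j 1 : Fin m → ℝ) ⬝ᵥ (fun i => H i j) = H j j := by
    simp [dotProduct, Pi.single_apply, ite_mul, Finset.sum_ite_eq, mul_comm]
  rw [h1, h2, h3]
  simp only [smul_eq_mul]
  ring

/-- If `y ∈ [0,1]^m` maximizes the quadratic form `x ↦ xᵀHx` over the cube `[0,1]^m`,
where `H` is symmetric with strictly positive diagonal, then `y ∈ {0,1}^m`. -/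
theorem stmt0 (m : ℕ) (H : Matrix (Fin m) (Fin m) ℝ) (hsymm : H.IsSymm)
    (hdiag : ∀ j, 0 < H j j) (y : Fin m → ℝ) (hy : ∀ j, y j ∈ Set.Icc (0:ℝ) 1)
    (hmax : ∀ x : Fin m → ℝ, (∀ j, x j ∈ Set.Icc (0:ℝ) 1) → x ⬝ᵥ (H *ᵥ x) ≤ y ⬝ᵥ (H *ᵥ y)) :
    ∀ j, y j = 0 ∨ y j = 1 := by
  intro j
  by_contra hne
  push_neg at hne
  obtain ⟨h0, h1⟩ := hne
  obtain ⟨hy0, hy1⟩ := hy j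
  have hlt0 : 0 < y j := lt_of_le_of_ne hy0 (Ne.symm h0)
  have hlt1 : y j < 1 := lt_of_le_of_ne hy1 h1
  set t := min (y j) (1 - y j) with ht
  have htpos : 0 < t := lt_min hlt0 (by linarith)
  have ht1 : t ≤ y j := min_le_left _ _
  have ht2 : t ≤ 1 - y j := min_le_right _ _
  have feas : ∀ s : ℝ, |s| ≤ t → ∀ k, (y + s • (Pi.single j 1 : Fin m → ℝ)) k ∈ Set.Icc (0:ℝ) 1 := by
    intro s hs k
    obtain ⟨hs1, hs2⟩ := abs_le.mp hs
    by_cases hk : k = j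
    · subst hk
      simp only [Pi.add_apply, Pi.smul_apply, Pi.single_eq_same, smul_eq_mul, mul_one]
      constructor <;> linarith
    · simp only [Pi.add_apply, Pi.smul_apply, Pi.single_eq_of_ne hk, smul_eq_mul, mul_zero,
        add_zero]
      exact hy k
  have hp := hmax _ (feas t (by rw [abs_of_pos htpos]))
  have hn := hmax _ (feas (-t) (by rw [abs_neg, abs_of_pos htpos]))
  rw [quad_expand] at hp hn
  have hq : 0 < t^2 * H j j := mul_pos (by positivity) (hdiag j)
  nlinarith [hp, hn, hq]
end

section
/- Fix constants β, γ, λ > 0, charger positions c_1, …, c_m ∈ ℝ² and receiver positions r_1, …, r_n ∈ ℝ² with n ≥ 1 and ‖c_j − r_i‖ > 0 for all j, i. If y ∈ [0,1]^m maximizes the total power P(x) = Σ_{i=1}^n γ‖Σ_{j=1}^m x_j E(c_j, r_i)‖² over all x ∈ [0,1]^m, then every coordinate of y equals 0 or 1; that is, in every optimal solution of MAX-POWER each charger either operates at full capacity or not at all. -/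
/-!
When only the level `t` of charger `k` varies, every received field is affine in `t`, and the
parallelogram-type identity `‖u + t v‖² = (1 - t)‖u‖² + t‖u + v‖² - t(1 - t)‖v‖²` gives
`P(t) = (1 - t) P(0) + t P(1) - t (1 - t) Σᵢ γ‖E(c_k, rᵢ)‖²`.
The last sum is positive since no field vanishes, so for `0 < t < 1` the power is strictly
below `max (P 0) (P 1)` and `t` cannot be optimal.
-/

open Matrix

/-- The electric field created at receiver position `r` by a fully operational charger
at position `c`: `E(c, r) = (β/d)·(cos(2πd/λ), sin(2πd/λ))` where `d = ‖c - r‖`. -/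
noncomputable def Efield (β lam : ℝ) (c r : EuclideanSpace ℝ (Fin 2)) :
    EuclideanSpace ℝ (Fin 2) :=
  (β / ‖c - r‖) • (WithLp.equiv 2 (Fin 2 → ℝ)).symm
    ![Real.cos (2 * Real.pi * ‖c - r‖ / lam), Real.sin (2 * Real.pi * ‖c - r‖ / lam)]

theorem norm_cos_sin (a : ℝ) :
    ‖(WithLp.equiv 2 (Fin 2 → ℝ)).symm ![Real.cos a, Real.sin a]‖ = 1 := by
  simp [EuclideanSpace.norm_eq, Fin.sum_univ_two]

theorem norm_Efield (β lam : ℝ) (c r : EuclideanSpace ℝ (Fin 2)) :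
    ‖Efield β lam c r‖ = |β| / ‖c - r‖ := by
  rw [Efield, norm_smul, norm_cos_sin, mul_one, norm_div, norm_norm, Real.norm_eq_abs]

section TotalPower

open Finset

variable {ι κ F : Type*} [Fintype ι] [Fintype κ] [NormedAddCommGroup F] [InnerProductSpace ℝ F]

theorem norm_add_smul_sq (u v : F) (t : ℝ) :
    ‖u + t • v‖ ^ 2 = (1 - t) * ‖u‖ ^ 2 + t * ‖u + v‖ ^ 2 - t * (1 - t) * ‖v‖ ^ 2 := by
  rw [norm_add_sq_real, norm_add_sq_real, real_inner_smul_right, norm_smul, mul_pow,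
    Real.norm_eq_abs, sq_abs]
  ring

theorem sum_update_smul [DecidableEq κ] (x : κ → ℝ) (v : κ → F) (k : κ) (t : ℝ) :
    ∑ j, Function.update x k t j • v j = ∑ j, Function.update x k 0 j • v j + t • v k := by
  simp only [← add_sum_erase _ _ (mem_univ k), Function.update_self, zero_smul, zero_add]
  rw [add_comm]
  congr 1
  refine sum_congr rfl fun j hj => ?_
  rw [Function.update_of_ne (ne_of_mem_erase hj), Function.update_of_ne (ne_of_mem_erase hj)]

/-- `E i j` is the field of charger `j` at receiver `i`. -/
def totalPower (w : ι → ℝ) (E : ι → κ → F) (x : κ → ℝ) : ℝ :=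
  ∑ i, w i * ‖∑ j, x j • E i j‖ ^ 2

theorem totalPower_update [DecidableEq κ] (w : ι → ℝ) (E : ι → κ → F) (x : κ → ℝ) (k : κ)
    (t : ℝ) :
    totalPower w E (Function.update x k t) =
      (1 - t) * totalPower w E (Function.update x k 0) +
        t * totalPower w E (Function.update x k 1) - t * (1 - t) * ∑ i, w i * ‖E i k‖ ^ 2 := by
  simp only [totalPower, sum_update_smul _ _ k t, sum_update_smul _ _ k 1, one_smul,
    norm_add_smul_sq, mul_sum, ← sum_sub_distrib, ← sum_add_distrib]
  refine sum_congr rfl fun i _ => ?_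
  ring

theorem eq_zero_or_eq_one_of_forall_totalPower_le (w : ι → ℝ) (E : ι → κ → F) {y : κ → ℝ}
    (hy : ∀ j, y j ∈ Set.Icc (0 : ℝ) 1)
    (hmax : ∀ x : κ → ℝ, (∀ j, x j ∈ Set.Icc (0 : ℝ) 1) → totalPower w E x ≤ totalPower w E y)
    {k : κ} (hk : 0 < ∑ i, w i * ‖E i k‖ ^ 2) :
    y k = 0 ∨ y k = 1 := by
  classical
  have hupdate : ∀ t ∈ Set.Icc (0 : ℝ) 1, ∀ j, Function.update y k t j ∈ Set.Icc (0 : ℝ) 1 :=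
    fun t ht j => by
      rcases eq_or_ne j k with rfl | hjk
      · simpa using ht
      · simpa [hjk] using hy j
  have h0 := hmax _ (hupdate 0 (by simp))
  have h1 := hmax _ (hupdate 1 (by simp))
  have hy_eq := totalPower_update w E y k (y k)
  rw [Function.update_eq_self] at hy_eq
  obtain ⟨hk0, hk1⟩ := hy k
  have hchord : y k * (1 - y k) * ∑ i, w i * ‖E i k‖ ^ 2 ≤ 0 := by
    nlinarith [mul_le_mul_of_nonneg_left h0 (sub_nonneg.2 hk1), mul_le_mul_of_nonneg_left h1 hk0]
  have hprod : y k * (1 - y k) ≤ 0 := nonpos_of_mul_nonpos_left hchord hk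
  rcases hk0.eq_or_lt with h | h
  · exact Or.inl h.symm
  · exact Or.inr (by nlinarith)

end TotalPower

theorem stmt1_general (β γ lam : ℝ) (hβ : 0 < β) (hγ : 0 < γ)
    (m n : ℕ) (hn : 1 ≤ n)
    (c : Fin m → EuclideanSpace ℝ (Fin 2)) (r : Fin n → EuclideanSpace ℝ (Fin 2))
    (hdist : ∀ j i, 0 < ‖c j - r i‖)
    (y : Fin m → ℝ) (hy : ∀ j, y j ∈ Set.Icc (0:ℝ) 1)
    (hmax : ∀ x : Fin m → ℝ, (∀ j, x j ∈ Set.Icc (0:ℝ) 1) →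
      (∑ i, γ * ‖∑ j, x j • Efield β lam (c j) (r i)‖ ^ 2) ≤
      (∑ i, γ * ‖∑ j, y j • Efield β lam (c j) (r i)‖ ^ 2)) :
    ∀ j, y j = 0 ∨ y j = 1 := by
  intro k
  refine eq_zero_or_eq_one_of_forall_totalPower_le (fun _ => γ)
    (fun i j => Efield β lam (c j) (r i)) hy hmax ?_
  have hfield : ∀ i, 0 < ‖Efield β lam (c k) (r i)‖ := fun i => by
    rw [norm_Efield, abs_of_pos hβ]
    exact div_pos hβ (hdist k i)
  exact Finset.sum_pos (fun i _ => by have := hfield i; positivity) ⟨⟨0, hn⟩, Finset.mem_univ _⟩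

/-- Every optimal solution of MAX-POWER is a 0-1 configuration: if `y ∈ [0,1]^m` maximizes
the total power `P(x) = Σᵢ γ‖Σⱼ xⱼ E(cⱼ, rᵢ)‖²`, then each charger operates at full
capacity or not at all. -/
theorem stmt1 (β γ lam : ℝ) (hβ : 0 < β) (hγ : 0 < γ) (hlam : 0 < lam)
    (m n : ℕ) (hn : 1 ≤ n)
    (c : Fin m → EuclideanSpace ℝ (Fin 2)) (r : Fin n → EuclideanSpace ℝ (Fin 2))
    (hdist : ∀ j i, 0 < ‖c j - r i‖)
    (y : Fin m → ℝ) (hy : ∀ j, y j ∈ Set.Icc (0:ℝ) 1)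
    (hmax : ∀ x : Fin m → ℝ, (∀ j, x j ∈ Set.Icc (0:ℝ) 1) →
      (∑ i, γ * ‖∑ j, x j • Efield β lam (c j) (r i)‖ ^ 2) ≤
      (∑ i, γ * ‖∑ j, y j • Efield β lam (c j) (r i)‖ ^ 2)) :
    ∀ j, y j = 0 ∨ y j = 1 :=
  stmt1_general β γ lam hβ hγ m n hn c r hdist y hy hmax
end

section
/- Set β = γ = λ = 1. Place chargers at c_1 = (0,0) and c_2 = (4,0), and receivers at r_1 = (−3/4, 0) and r_2 = (13/4, 0). For x ∈ [0,1]², let P(x, r) = ‖x_1·E(c_1, r) + x_2·E(c_2, r)‖² and g(x) = min{P(x, r_1), P(x, r_2)}. Then there exists x ∈ [0,1]² such that g(x) > g(y) for every y ∈ {0,1}²; that is, for MAX-kMIN-GUARANTEE with k = 1, a fractional configuration strictly beats every 0-1 configuration, so the analogue of Lemma 1 fails for this problem. -/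
/-- Charger 1 at `(0,0)`. -/
noncomputable def c1 : EuclideanSpace ℝ (Fin 2) := (WithLp.equiv 2 (Fin 2 → ℝ)).symm ![0, 0]
/-- Charger 2 at `(4,0)`. -/
noncomputable def c2 : EuclideanSpace ℝ (Fin 2) := (WithLp.equiv 2 (Fin 2 → ℝ)).symm ![4, 0]
/-- Receiver 1 at `(−3/4, 0)`. -/
noncomputable def r1 : EuclideanSpace ℝ (Fin 2) :=
  (WithLp.equiv 2 (Fin 2 → ℝ)).symm ![-(3/4 : ℝ), 0]
/-- Receiver 2 at `(13/4, 0)`. -/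
noncomputable def r2 : EuclideanSpace ℝ (Fin 2) :=
  (WithLp.equiv 2 (Fin 2 → ℝ)).symm ![(13/4 : ℝ), 0]

/-- The power received at `r` under configuration `x` (with `β = γ = λ = 1`). -/
noncomputable def recPower (x : Fin 2 → ℝ) (r : EuclideanSpace ℝ (Fin 2)) : ℝ :=
  ‖x 0 • Efield 1 1 c1 r + x 1 • Efield 1 1 c2 r‖ ^ 2

/-- The minimum received power among the two receivers (MAX-kMIN-GUARANTEE with k = 1). -/
noncomputable def g (x : Fin 2 → ℝ) : ℝ := min (recPower x r1) (recPower x r2)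

open Real

lemma normPair (a b c d : ℝ) :
    ‖((WithLp.equiv 2 (Fin 2 → ℝ)).symm ![a,b] - (WithLp.equiv 2 (Fin 2 → ℝ)).symm ![c,d] :
      EuclideanSpace ℝ (Fin 2))‖ = Real.sqrt ((a-c)^2 + (b-d)^2) := by
  rw [EuclideanSpace.norm_eq]
  simp [Fin.sum_univ_two, sq_abs]

lemma normsq_add_smul (a b u v s t : ℝ) :
    ‖(a • ((WithLp.equiv 2 (Fin 2 → ℝ)).symm ![u,v]) +
      b • ((WithLp.equiv 2 (Fin 2 → ℝ)).symm ![s,t]) : EuclideanSpace ℝ (Fin 2))‖^2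
      = (a*u+b*s)^2 + (a*v+b*t)^2 := by
  rw [EuclideanSpace.norm_eq, Real.sq_sqrt (by positivity)]
  simp [Fin.sum_univ_two, sq_abs]

lemma norm_c1r1 : ‖c1 - r1‖ = 3/4 := by
  rw [c1, r1, normPair, show (0-(-(3/4:ℝ)))^2+((0:ℝ)-0)^2 = (3/4)^2 by norm_num,
    Real.sqrt_sq (by norm_num)]

lemma norm_c2r1 : ‖c2 - r1‖ = 19/4 := by
  rw [c2, r1, normPair, show (4-(-(3/4:ℝ)))^2+((0:ℝ)-0)^2 = (19/4)^2 by norm_num,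
    Real.sqrt_sq (by norm_num)]

lemma norm_c1r2 : ‖c1 - r2‖ = 13/4 := by
  rw [c1, r2, normPair, show ((0:ℝ)-13/4)^2+((0:ℝ)-0)^2 = (13/4)^2 by norm_num,
    Real.sqrt_sq (by norm_num)]

lemma norm_c2r2 : ‖c2 - r2‖ = 3/4 := by
  rw [c2, r2, normPair, show ((4:ℝ)-13/4)^2+((0:ℝ)-0)^2 = (3/4)^2 by norm_num,
    Real.sqrt_sq (by norm_num)]

lemma E11 : Efield 1 1 c1 r1 = (4/3 : ℝ) • (WithLp.equiv 2 (Fin 2 → ℝ)).symm ![0, -1] := by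
  have h1 : Real.cos (2*π*(3/4)/1) = 0 := by
    have : (2*π*(3/4)/1) = -(π/2) + (1:ℤ) * (2*π) := by push_cast; ring
    rw [this, Real.cos_add_int_mul_two_pi, Real.cos_neg, Real.cos_pi_div_two]
  have h2 : Real.sin (2*π*(3/4)/1) = -1 := by
    have : (2*π*(3/4)/1) = -(π/2) + (1:ℤ) * (2*π) := by push_cast; ring
    rw [this, Real.sin_add_int_mul_two_pi, Real.sin_neg, Real.sin_pi_div_two]
  rw [Efield, norm_c1r1, h1, h2]
  norm_num

lemma E21 : Efield 1 1 c2 r1 = (4/19 : ℝ) • (WithLp.equiv 2 (Fin 2 → ℝ)).symm ![0, -1] := by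
  have h1 : Real.cos (2*π*(19/4)/1) = 0 := by
    have : (2*π*(19/4)/1) = -(π/2) + (5:ℤ) * (2*π) := by push_cast; ring
    rw [this, Real.cos_add_int_mul_two_pi, Real.cos_neg, Real.cos_pi_div_two]
  have h2 : Real.sin (2*π*(19/4)/1) = -1 := by
    have : (2*π*(19/4)/1) = -(π/2) + (5:ℤ) * (2*π) := by push_cast; ring
    rw [this, Real.sin_add_int_mul_two_pi, Real.sin_neg, Real.sin_pi_div_two]
  rw [Efield, norm_c2r1, h1, h2]
  norm_num

lemma E12 : Efield 1 1 c1 r2 = (4/13 : ℝ) • (WithLp.equiv 2 (Fin 2 → ℝ)).symm ![0, 1] := by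
  have h1 : Real.cos (2*π*(13/4)/1) = 0 := by
    have : (2*π*(13/4)/1) = π/2 + (3:ℤ) * (2*π) := by push_cast; ring
    rw [this, Real.cos_add_int_mul_two_pi, Real.cos_pi_div_two]
  have h2 : Real.sin (2*π*(13/4)/1) = 1 := by
    have : (2*π*(13/4)/1) = π/2 + (3:ℤ) * (2*π) := by push_cast; ring
    rw [this, Real.sin_add_int_mul_two_pi, Real.sin_pi_div_two]
  rw [Efield, norm_c1r2, h1, h2]
  norm_num

lemma E22 : Efield 1 1 c2 r2 = (4/3 : ℝ) • (WithLp.equiv 2 (Fin 2 → ℝ)).symm ![0, -1] := by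
  have h1 : Real.cos (2*π*(3/4)/1) = 0 := by
    have : (2*π*(3/4)/1) = -(π/2) + (1:ℤ) * (2*π) := by push_cast; ring
    rw [this, Real.cos_add_int_mul_two_pi, Real.cos_neg, Real.cos_pi_div_two]
  have h2 : Real.sin (2*π*(3/4)/1) = -1 := by
    have : (2*π*(3/4)/1) = -(π/2) + (1:ℤ) * (2*π) := by push_cast; ring
    rw [this, Real.sin_add_int_mul_two_pi, Real.sin_neg, Real.sin_pi_div_two]
  rw [Efield, norm_c2r2, h1, h2]
  norm_num

lemma recPower_r1 (x : Fin 2 → ℝ) :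
    recPower x r1 = (x 0 * (4/3) + x 1 * (4/19))^2 := by
  rw [recPower, E11, E21, smul_smul, smul_smul, normsq_add_smul]
  ring

lemma recPower_r2 (x : Fin 2 → ℝ) :
    recPower x r2 = (x 0 * (4/13) - x 1 * (4/3))^2 := by
  rw [recPower, E12, E22, smul_smul, smul_smul, normsq_add_smul]
  ring

/-- The paper's counterexample: for MAX-kMIN-GUARANTEE with `k = 1`, some fractional
configuration in `[0,1]²` strictly beats every 0-1 configuration. -/
theorem stmt11 : ∃ x : Fin 2 → ℝ, (∀ j, x j ∈ Set.Icc (0:ℝ) 1) ∧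
    ∀ y : Fin 2 → ℝ, (∀ j, y j = 0 ∨ y j = 1) → g y < g x := by
  refine ⟨![13/19, 1], ?_, ?_⟩
  · intro j
    fin_cases j <;> constructor <;> norm_num
  · intro y hy
    have hx : g ![13/19, 1] = (64/57)^2 := by
      rw [g, recPower_r1, recPower_r2]
      norm_num
    rw [hx]
    rcases hy 0 with h0 | h0 <;> rcases hy 1 with h1 | h1 <;>
      rw [g, recPower_r1, recPower_r2, h0, h1] <;> norm_num
end
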